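/- arXiv:2310.01032 — 3 statements merged into one kernel-verified Lean document; each statement's English description precedes it below -/
import Mathlib

section
/- The real bilinear form (ξ, η) ↦ α·Re(tr(Σ⁻¹ ξ Σ⁻¹ η)) + β·Re(tr(Σ⁻¹ ξ)·tr(Σ⁻¹ η)) on p×p Hermitian matrices is positive definite whenever α > 0 and β > −α/p. -/
/-!
Write `Σ⁻¹ = R * R` with `R = Σ^{-1/2}` Hermitian and invertible. For the nonzero Hermitian
matrix `M = R ξ R` the form becomes `α tr(M²) + β (tr M)²`, where `tr(M²) = ‖M‖²_F > 0` and, by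
Cauchy–Schwarz on the diagonal, `(tr M)² ≤ p ‖M‖²_F`. Hence the form is at least
`min(α, α + β p) ‖M‖²_F > 0`.
-/

open scoped ComplexOrder
open Matrix

theorem add_mul_sq_pos_of_sq_le_mul {α β p s t : ℝ} (hα : 0 < α) (hβ : -α / p < β)
    (hs : 0 < s) (ht : t ^ 2 ≤ p * s) : 0 < α * s + β * t ^ 2 := by
  rcases le_or_gt 0 β with hβ0 | hβ0
  · positivity
  have hp : 0 < p := by
    rcases (nonneg_of_mul_nonneg_left ((sq_nonneg t).trans ht) hs).eq_or_lt with rfl | hp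
    · simp only [div_zero] at hβ; linarith
    · exact hp
  have : 0 < α + β * p := by rw [div_lt_iff₀ hp] at hβ; linarith
  nlinarith

namespace Matrix

variable {n 𝕜 : Type*} [Fintype n] [RCLike 𝕜]

open RCLike

theorem IsHermitian.ofReal_re_trace {M : Matrix n n 𝕜} (hM : M.IsHermitian) :
    ((re M.trace : ℝ) : 𝕜) = M.trace := by
  rw [← conj_eq_iff_re, ← star_def, ← trace_conjTranspose, hM.eq]

theorem IsHermitian.re_trace_mul_self {M : Matrix n n 𝕜} (hM : M.IsHermitian) :
    re (M * M).trace = ∑ i, ∑ j, ‖M i j‖ ^ 2 := by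
  nth_rw 1 [← hM.eq]
  simp only [trace, diag, mul_apply, conjTranspose_apply, star_def, RCLike.conj_mul, map_sum,
    ← ofReal_pow, ofReal_re]
  exact Finset.sum_comm

theorem sq_re_trace_le_card_mul_sum_norm_sq (M : Matrix n n 𝕜) :
    re M.trace ^ 2 ≤ Fintype.card n * ∑ i, ∑ j, ‖M i j‖ ^ 2 := calc
  re M.trace ^ 2 = (∑ i, re (M i i)) ^ 2 := by simp [trace]
  _ ≤ Fintype.card n * ∑ i, re (M i i) ^ 2 := sq_sum_le_card_mul_sum_sq
  _ ≤ Fintype.card n * ∑ i, ∑ j, ‖M i j‖ ^ 2 := by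
    gcongr with i
    calc re (M i i) ^ 2 ≤ ‖M i i‖ ^ 2 := by
          rw [sq_le_sq, abs_norm]; exact abs_re_le_norm _
      _ ≤ ∑ j, ‖M i j‖ ^ 2 :=
          Finset.single_le_sum (f := fun j ↦ ‖M i j‖ ^ 2) (fun _ _ ↦ by positivity)
            (Finset.mem_univ i)

theorem sum_norm_sq_pos {M : Matrix n n 𝕜} (hM : M ≠ 0) : 0 < ∑ i, ∑ j, ‖M i j‖ ^ 2 := by
  obtain ⟨i, j, hij⟩ : ∃ i j, M i j ≠ 0 := by
    by_contra! h; exact hM (ext h)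
  exact Finset.sum_pos' (fun _ _ ↦ by positivity) ⟨i, Finset.mem_univ _,
    Finset.sum_pos' (fun _ _ ↦ by positivity) ⟨j, Finset.mem_univ _, by positivity⟩⟩

theorem IsHermitian.mul_re_trace_mul_self_add_mul_re_trace_mul_trace_pos {M : Matrix n n 𝕜}
    (hM : M.IsHermitian) (hM0 : M ≠ 0) {α β : ℝ} (hα : 0 < α)
    (hβ : -α / Fintype.card n < β) :
    0 < α * re (M * M).trace + β * re (M.trace * M.trace) := by
  rw [← hM.ofReal_re_trace, ← ofReal_mul, ofReal_re, ← sq, hM.re_trace_mul_self]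
  exact add_mul_sq_pos_of_sq_le_mul hα hβ (sum_norm_sq_pos hM0)
    (sq_re_trace_le_card_mul_sum_norm_sq M)

open scoped MatrixOrder in
theorem PosDef.exists_isHermitian_isUnit_mul_self_eq [DecidableEq n] {A : Matrix n n 𝕜}
    (hA : A.PosDef) : ∃ R : Matrix n n 𝕜, R.IsHermitian ∧ IsUnit R ∧ R * R = A :=
  ⟨CFC.sqrt A, (CFC.sqrt_nonneg A).posSemidef.isHermitian,
    hA.isStrictlyPositive.isUnit_cfcSqrt, CFC.sqrt_mul_sqrt_self A⟩

section CommRing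

variable {R : Type*} [CommRing R] (A ξ : Matrix n n R)

theorem trace_mul_self_mul : (A * A * ξ).trace = (A * ξ * A).trace := by
  rw [mul_assoc, trace_mul_comm]

theorem trace_mul_self_mul_mul_self :
    (A * A * ξ * (A * A) * ξ).trace = (A * ξ * A * (A * ξ * A)).trace := by
  rw [show A * A * ξ * (A * A) * ξ = A * (A * ξ * A * A * ξ) by simp only [mul_assoc],
    trace_mul_comm]
  simp only [mul_assoc]

end CommRing

end Matrix

/-- The bilinear form `(ξ, η) ↦ α Re tr(Σ⁻¹ξΣ⁻¹η) + β Re(tr(Σ⁻¹ξ) tr(Σ⁻¹η))`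
on Hermitian matrices is positive definite when `α > 0` and `β > -α/p`. -/
theorem metric_pos_def (p : ℕ) (S : Matrix (Fin p) (Fin p) ℂ) (hS : S.PosDef)
    (α β : ℝ) (hα : 0 < α) (hβ : β > -α / p) :
    ∀ ξ : Matrix (Fin p) (Fin p) ℂ, ξ.IsHermitian → ξ ≠ 0 →
      0 < α * ((S⁻¹ * ξ * S⁻¹ * ξ).trace).re
          + β * (((S⁻¹ * ξ).trace * (S⁻¹ * ξ).trace)).re := by
  intro ξ hξ hξ0
  obtain ⟨R, hR, hRunit, hRR⟩ := hS.inv.exists_isHermitian_isUnit_mul_self_eq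
  have hM : (R * ξ * R).IsHermitian := by
    simpa only [hR.eq] using isHermitian_mul_mul_conjTranspose R hξ
  have hM0 : R * ξ * R ≠ 0 := by
    rwa [Ne, hRunit.mul_left_eq_zero, hRunit.mul_right_eq_zero]
  rw [← hRR, trace_mul_self_mul_mul_self, trace_mul_self_mul]
  exact hM.mul_re_trace_mul_self_add_mul_re_trace_mul_trace_pos hM0 hα (by simpa using hβ)
end

section
/- The curve γ(t) = Σ·exp(t·Σ⁻¹ξ) satisfies the geodesic differential equation γ''(t) − γ'(t)·γ(t)⁻¹·γ'(t) = 0, with γ(0) = Σ and γ'(0) = ξ. -/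
open scoped ComplexOrder
open Matrix NormedSpace

theorem Matrix.mul_mul_inv_mul_mul_of_isUnit_det {n α : Type*} [Fintype n] [DecidableEq n]
    [CommRing α] (A S B E : Matrix n n α) (hE : IsUnit E.det) :
    A * E * (S * E)⁻¹ * (B * E) = A * S⁻¹ * B * E := by
  rw [Matrix.mul_inv_rev]
  calc A * E * (E⁻¹ * S⁻¹) * (B * E) = A * (E * E⁻¹) * S⁻¹ * B * E := by noncomm_ring
    _ = A * S⁻¹ * B * E := by rw [Matrix.mul_nonsing_inv E hE, Matrix.mul_one]

theorem geodesic_ode_general (p : ℕ) (S ξ : Matrix (Fin p) (Fin p) ℂ) :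
    (∀ t : ℝ,
      ξ * S⁻¹ * ξ * exp ((t : ℂ) • (S⁻¹ * ξ))
        - (ξ * exp ((t : ℂ) • (S⁻¹ * ξ)))
            * (S * exp ((t : ℂ) • (S⁻¹ * ξ)))⁻¹
            * (ξ * exp ((t : ℂ) • (S⁻¹ * ξ))) = 0) ∧
    S * exp (((0 : ℝ) : ℂ) • (S⁻¹ * ξ)) = S ∧
    ξ * exp (((0 : ℝ) : ℂ) • (S⁻¹ * ξ)) = ξ := by
  refine ⟨fun t => ?_, by simp, by simp⟩
  have hexp : IsUnit (exp ((t : ℂ) • (S⁻¹ * ξ))).det :=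
    (Matrix.isUnit_iff_isUnit_det _).mp (Matrix.isUnit_exp _)
  rw [Matrix.mul_mul_inv_mul_mul_of_isUnit_det _ _ _ _ hexp, sub_self]

/-- The curve `γ(t) = Σ exp(t Σ⁻¹ ξ)` satisfies the geodesic equation
`γ'' - γ' γ⁻¹ γ' = 0` with `γ(0) = Σ` and `γ'(0) = ξ`, where
`γ'(t) = ξ exp(t Σ⁻¹ ξ)` and `γ''(t) = ξ Σ⁻¹ ξ exp(t Σ⁻¹ ξ)`. -/
theorem geodesic_ode (p : ℕ) (S ξ : Matrix (Fin p) (Fin p) ℂ)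
    (hS : S.PosDef) (hξ : ξ.IsHermitian) :
    (∀ t : ℝ,
      ξ * S⁻¹ * ξ * exp ((t : ℂ) • (S⁻¹ * ξ))
        - (ξ * exp ((t : ℂ) • (S⁻¹ * ξ)))
            * (S * exp ((t : ℂ) • (S⁻¹ * ξ)))⁻¹
            * (ξ * exp ((t : ℂ) • (S⁻¹ * ξ))) = 0) ∧
    S * exp (((0 : ℝ) : ℂ) • (S⁻¹ * ξ)) = S ∧
    ξ * exp (((0 : ℝ) : ℂ) • (S⁻¹ * ξ)) = ξ :=
  geodesic_ode_general p S ξ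
end

section
/- Second-order retraction stays in the cone: for Σ Hermitian positive definite and ξ Hermitian, the matrix Σ + ξ + (1/2)·ξ·Σ⁻¹·ξ is Hermitian positive definite. -/
open scoped ComplexOrder
open Matrix

/-!
Completing the square, `2 (Σ + ξ + ½ ξ Σ⁻¹ ξ) = Σ + (Σ + ξ) Σ⁻¹ (Σ + ξ)`: a positive definite
matrix plus a congruence of the positive definite `Σ⁻¹`, which is positive semidefinite.
-/

theorem Matrix.add_mul_nonsing_inv_mul_add {n R : Type*} [Fintype n] [DecidableEq n] [CommRing R]
    {S : Matrix n n R} (hS : IsUnit S.det) (ξ : Matrix n n R) :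
    (S + ξ) * S⁻¹ * (S + ξ) = S + 2 • ξ + ξ * S⁻¹ * ξ := by
  rw [Matrix.add_mul, Matrix.add_mul, mul_nonsing_inv S hS, Matrix.one_mul, Matrix.mul_add,
    Matrix.mul_assoc ξ, nonsing_inv_mul S hS, Matrix.mul_one, two_nsmul]
  abel

/-- The second-order retraction `Σ + ξ + (1/2) ξ Σ⁻¹ ξ` is Hermitian positive
definite for `Σ` Hermitian positive definite and `ξ` Hermitian. -/
theorem second_order_retraction_posDef (p : ℕ) (S ξ : Matrix (Fin p) (Fin p) ℂ)
    (hS : S.PosDef) (hξ : ξ.IsHermitian) :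
    (S + ξ + (1 / 2 : ℂ) • (ξ * S⁻¹ * ξ)).PosDef := by
  have hSξ : (S + ξ)ᴴ = S + ξ := (hS.isHermitian.add hξ).eq
  have hsquare : S + ξ + (1 / 2 : ℂ) • (ξ * S⁻¹ * ξ)
      = (1 / 2 : ℂ) • (S + (S + ξ)ᴴ * S⁻¹ * (S + ξ)) := by
    rw [hSξ, add_mul_nonsing_inv_mul_add ((isUnit_iff_isUnit_det S).mp hS.isUnit)]
    module
  rw [hsquare]
  exact (hS.add_posSemidef (hS.inv.posSemidef.conjTranspose_mul_mul_same _)).smul (by norm_num)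
end
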